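/- arXiv:1511.06863 — 2 statements merged into one kernel-verified Lean document; each statement's English description precedes it below -/
import Mathlib

section
/- Let G be a nilpotent group of class 3 and x,y ∈ G. Then for any nonnegative integer m, (xy)^m = x^m y^m [x,y]^{-C(m,2)} [x,y,x]^{-C(m,3)} [x,y,y]^{C(m,3)+(1-m)C(m,2)}. -/
/-!
Put `c = [x,y]`, `z₁ = [c,x]`, `z₂ = [c,y]`. In class 3 the elements `z₁, z₂` are central, so
conjugation gives `cⁿ x = x cⁿ z₁ⁿ` and `cⁿ y = y cⁿ z₂ⁿ`, and the class-2 power formula applied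
to `x⁻¹ y x = y c⁻¹` gives `yᵏ x = x yᵏ c⁻ᵏ z₂^{-C(k,2)}`. Multiplying the formula for `(xy)ᵐ` by
`xy`, moving `x` and then `y` to the left with these rules and collecting the central factors
gives the formula for `m + 1`; the exponent of `z₂` closes up because `2·C(m,2) = m² - m`.
-/

/-- The commutator `[a,b] = a⁻¹b⁻¹ab` used in the paper. -/
def pcomm {G : Type*} [Group G] (a b : G) : G := a⁻¹ * b⁻¹ * a * b

theorem choose_succ_three_add_mul_choose_succ_two (m : ℕ) :
    ((m + 1).choose 3 : ℤ) + (1 - ((m + 1 : ℕ) : ℤ)) * ((m + 1).choose 2 : ℤ) =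
      (m.choose 3 : ℤ) + (1 - (m : ℤ)) * (m.choose 2 : ℤ) - m - 2 * (m.choose 2 : ℤ) := by
  have h2 : 2 * (m.choose 2 : ℤ) = m * m - m := by qify; rw [Nat.cast_choose_two]; ring
  rw [Nat.choose_succ_succ, Nat.choose_succ_succ, Nat.choose_one_right]
  push_cast
  linear_combination h2

open scoped commutatorElement

section

variable {G : Type*} [Group G]

theorem inv_mul_mul_pow (a b : G) (n : ℕ) : (a⁻¹ * b * a) ^ n = a⁻¹ * b ^ n * a := by
  simpa using conj_pow (i := n) (a := a⁻¹) (b := b)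

theorem inv_mul_mul_zpow (a b : G) (n : ℤ) : (a⁻¹ * b * a) ^ n = a⁻¹ * b ^ n * a := by
  simpa using conj_zpow (i := n) (a := a⁻¹) (b := b)

theorem zpow_mul_eq_of_inv_mul_mul_eq {a b z : G} (hbz : Commute b z) (h : a⁻¹ * b * a = b * z)
    (n : ℤ) : b ^ n * a = a * b ^ n * z ^ n := by
  calc b ^ n * a = a * (a⁻¹ * b * a) ^ n := by rw [inv_mul_mul_zpow]; group
    _ = a * b ^ n * z ^ n := by rw [h, hbz.mul_zpow, mul_assoc]

theorem mul_pow_of_mul_eq_mul_mul_of_mem_center {a b z : G} (hz : z ∈ Subgroup.center G)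
    (h : b * a = a * b * z) (k : ℕ) : (a * b) ^ k = a ^ k * b ^ k * z ^ k.choose 2 := by
  have hconj : a⁻¹ * b * a = b * z := by rw [mul_assoc, h]; group
  have hba (k : ℕ) : b ^ k * a = a * b ^ k * z ^ k := by
    exact_mod_cast zpow_mul_eq_of_inv_mul_mul_eq (hz.comm b).symm hconj k
  induction k with
  | zero => simp
  | succ k ih =>
    calc (a * b) ^ (k + 1) = a ^ k * (b ^ k * a) * b * z ^ k.choose 2 := by
          rw [pow_succ, ih, ((Subgroup.pow_mem _ hz _).comm _).right_comm]; group
      _ = a ^ k * a * b ^ k * b * z ^ k * z ^ k.choose 2 := by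
          rw [hba, ← ((Subgroup.pow_mem _ hz k).comm b).right_comm]; group
      _ = a ^ (k + 1) * b ^ (k + 1) * z ^ (k + 1).choose 2 := by
          rw [Nat.choose_succ_succ, Nat.choose_one_right]; group

theorem inv_mul_mul_eq_mul_pcomm (a b : G) : a⁻¹ * b * a = b * pcomm b a := by
  simp only [pcomm]; group

theorem inv_mul_mul_eq_mul_inv_pcomm (a b : G) : a⁻¹ * b * a = b * (pcomm a b)⁻¹ := by
  simp only [pcomm]; group

theorem zpow_mul_eq_of_pcomm_mem_center {a b : G} (h : pcomm b a ∈ Subgroup.center G) (n : ℤ) :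
    b ^ n * a = a * b ^ n * pcomm b a ^ n :=
  zpow_mul_eq_of_inv_mul_mul_eq (h.comm b).symm (inv_mul_mul_eq_mul_pcomm a b) n

theorem pow_mul_eq_of_pcomm_mem_center {x y : G} (hy : pcomm (pcomm x y) y ∈ Subgroup.center G)
    (k : ℕ) :
    y ^ k * x =
      x * y ^ k * pcomm x y ^ (-(k : ℤ)) * pcomm (pcomm x y) y ^ (-(k.choose 2 : ℤ)) := by
  have hyc : (pcomm x y)⁻¹ * y = y * (pcomm x y)⁻¹ * (pcomm (pcomm x y) y)⁻¹ := by
    simpa using zpow_mul_eq_of_pcomm_mem_center hy (-1)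
  calc y ^ k * x = x * (x⁻¹ * y * x) ^ k := by rw [inv_mul_mul_pow]; group
    _ = x * y ^ k * pcomm x y ^ (-(k : ℤ)) * pcomm (pcomm x y) y ^ (-(k.choose 2 : ℤ)) := by
        rw [inv_mul_mul_eq_mul_inv_pcomm,
          mul_pow_of_mul_eq_mul_mul_of_mem_center (Subgroup.inv_mem _ hy) hyc]
        group

theorem mul_pow_eq_of_pcomm_mem_center {x y : G} (hx : pcomm (pcomm x y) x ∈ Subgroup.center G)
    (hy : pcomm (pcomm x y) y ∈ Subgroup.center G) (m : ℕ) :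
    (x * y) ^ m =
      x ^ m * y ^ m * (pcomm x y) ^ (-(m.choose 2 : ℤ)) *
        (pcomm (pcomm x y) x) ^ (-(m.choose 3 : ℤ)) *
        (pcomm (pcomm x y) y) ^ ((m.choose 3 : ℤ) + (1 - (m : ℤ)) * (m.choose 2 : ℤ)) := by
  have hyx := pow_mul_eq_of_pcomm_mem_center hy
  have hcx := zpow_mul_eq_of_pcomm_mem_center hx
  have hcy := zpow_mul_eq_of_pcomm_mem_center hy
  set c := pcomm x y
  set z₁ := pcomm c x
  set z₂ := pcomm c y
  have hz₁ (n : ℤ) (g : G) : Commute (z₁ ^ n) g := (Subgroup.zpow_mem _ hx n).comm g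
  have hz₂ (n : ℤ) (g : G) : Commute (z₂ ^ n) g := (Subgroup.zpow_mem _ hy n).comm g
  induction m with
  | zero => simp
  | succ m ih =>
    have hymx := hyx m
    rw [choose_succ_three_add_mul_choose_succ_two, Nat.choose_succ_succ, Nat.choose_succ_succ,
      Nat.choose_one_right]
    push_cast
    set C₂ : ℤ := ((m.choose 2 : ℕ) : ℤ)
    set C₃ : ℤ := ((m.choose 3 : ℕ) : ℤ)
    set e : ℤ := C₃ + (1 - (m : ℤ)) * C₂
    calc (x * y) ^ (m + 1) = x ^ m * y ^ m * (c ^ (-C₂) * x) * y * z₁ ^ (-C₃) * z₂ ^ e := by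
          rw [pow_succ, ih, (hz₂ e _).right_comm, (hz₁ (-C₃) _).right_comm]; group
      _ = x ^ m * (y ^ m * x) * c ^ (-C₂) * (z₁ ^ (-C₂) * y) * z₁ ^ (-C₃) * z₂ ^ e := by
          rw [hcx]; group
      _ = x ^ (m + 1) * y ^ m * c ^ (-(m : ℤ)) * z₂ ^ (-C₂) * c ^ (-C₂) * y * z₁ ^ (-C₂) *
            z₁ ^ (-C₃) * z₂ ^ e := by
          rw [hymx, (hz₁ _ y).eq]; group
      _ = x ^ (m + 1) * y ^ m * (c ^ (-(m + C₂)) * y) * z₁ ^ (-(C₂ + C₃)) * z₂ ^ (e - C₂) := by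
          rw [(hz₂ (-C₂) _).right_comm, (hz₂ (-C₂) _).right_comm, (hz₂ (-C₂) _).right_comm,
            (hz₂ (-C₂) _).right_comm]
          group
      _ = x ^ (m + 1) * y ^ (m + 1) * c ^ (-(m + C₂)) * z₂ ^ (-(m + C₂)) * z₁ ^ (-(C₂ + C₃)) *
            z₂ ^ (e - C₂) := by
          rw [hcy]; group
      _ = x ^ (m + 1) * y ^ (m + 1) * c ^ (-(m + C₂)) * z₁ ^ (-(C₂ + C₃)) *
            z₂ ^ (e - m - 2 * C₂) := by
          rw [(hz₂ _ _).right_comm]; group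

theorem pcomm_mem_lowerCentralSeries_succ {n : ℕ} {a : G}
    (ha : a ∈ (⊤ : Subgroup G).lowerCentralSeries n) (b : G) :
    pcomm a b ∈ (⊤ : Subgroup G).lowerCentralSeries (n + 1) := by
  have hpcomm : pcomm a b = ⁅a⁻¹, b⁻¹⁆ := by simp only [pcomm, commutatorElement_def, inv_inv]
  rw [hpcomm]
  exact Subgroup.commutator_mem_commutator (Subgroup.inv_mem _ ha) (Subgroup.mem_top _)

theorem mem_center_of_mem_lowerCentralSeries {n : ℕ}
    (h : (⊤ : Subgroup G).lowerCentralSeries (n + 1) = ⊥) {z : G}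
    (hz : z ∈ (⊤ : Subgroup G).lowerCentralSeries n) : z ∈ Subgroup.center G := by
  refine Subgroup.mem_center_iff.mpr fun g ↦ ?_
  have hzg := Subgroup.commutator_mem_commutator hz (Subgroup.mem_top g)
  rw [← Subgroup.lowerCentralSeries_succ, h, Subgroup.mem_bot,
    commutatorElement_eq_one_iff_mul_comm] at hzg
  exact hzg.symm

end

/-- In a nilpotent group of class 3,
`(xy)^m = xᵐ yᵐ [x,y]^{-C(m,2)} [x,y,x]^{-C(m,3)} [x,y,y]^{C(m,3)+(1-m)C(m,2)}`. -/
theorem stmt_5 {G : Type*} [Group G] (h4 : Subgroup.lowerCentralSeries (⊤ : Subgroup G) 3 = ⊥)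
    (x y : G) (m : ℕ) :
    (x * y) ^ m =
      x ^ m * y ^ m * (pcomm x y) ^ (-(Nat.choose m 2 : ℤ)) *
        (pcomm (pcomm x y) x) ^ (-(Nat.choose m 3 : ℤ)) *
        (pcomm (pcomm x y) y) ^
          ((Nat.choose m 3 : ℤ) + (1 - (m : ℤ)) * (Nat.choose m 2 : ℤ)) := by
  have hc : pcomm x y ∈ (⊤ : Subgroup G).lowerCentralSeries 1 :=
    pcomm_mem_lowerCentralSeries_succ (Subgroup.mem_top x) y
  exact mul_pow_eq_of_pcomm_mem_center
    (mem_center_of_mem_lowerCentralSeries h4 (pcomm_mem_lowerCentralSeries_succ hc x))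
    (mem_center_of_mem_lowerCentralSeries h4 (pcomm_mem_lowerCentralSeries_succ hc y)) m
end

section
/- Let G be a nilpotent group of class 3 and x,y ∈ G. Then for any nonnegative integer m, (xy^{-1})^m = x^m y^{-m} [x,y]^{C(m,2)} [x,y,x]^{C(m,3)} [x,y,y]^{C(m,3) - m·C(m,2)}. -/
/-!
Put `c = [x,y]`, `d = [c,x]`, `e = [c,y]`; in class 3 both `d` and `e` are central, and the only
relations needed are `b⁻¹ a b = a [a,b]` for the pairs `(x,y)`, `(c,x)`, `(c,y)`. Induct on `m`,
multiplying by `xy⁻¹` on the left: conjugating `xᵐ` by `y` gives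
`(xc)ᵐ = xᵐ cᵐ d^{C(m,2)}` (the class-2 power formula), and moving `cᵐ` to the right past
`y^{-(m+1)}` costs `e^{-m(m+1)}`.
-/

open scoped commutatorElement

section Collection

variable {G : Type*} [Group G]

theorem mul_eq_mul_mul_pcomm (a b : G) : a * b = b * (a * pcomm a b) := by
  simp only [pcomm]
  group

theorem commute_of_mem_lowerCentralSeries {n : ℕ}
    (h : (⊤ : Subgroup G).lowerCentralSeries (n + 1) = ⊥) {a : G}
    (ha : a ∈ (⊤ : Subgroup G).lowerCentralSeries n) (g : G) : Commute a g := by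
  rw [← commutatorElement_eq_one_iff_commute, ← Subgroup.mem_bot, ← h]
  exact Subgroup.commutator_mem_commutator ha (Subgroup.mem_top g)

variable {a b k : G}

theorem zpow_mul_zpow_of_central (hk : ∀ g, Commute k g) (h : a * b = b * (a * k)) (i j : ℤ) :
    a ^ i * b ^ j = b ^ j * (a ^ i * k ^ (i * j)) := by
  have hb : SemiconjBy b (a ^ i * k ^ i) (a ^ i) := by
    rw [← (hk a).symm.mul_zpow]
    exact SemiconjBy.zpow_right h.symm i
  have ha : SemiconjBy (a ^ i) b (b * k ^ i) := by
    rw [SemiconjBy, ← hb.eq, ← mul_assoc, ((hk _).zpow_left i).right_comm]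
  rw [ha.zpow_right j, ((hk b).zpow_left i).symm.mul_zpow, ← zpow_mul, mul_assoc,
    ((hk _).zpow_left _).eq]

theorem mul_pow_of_central (hk : ∀ g, Commute k g) (h : b * a = a * (b * k)) (m : ℕ) :
    (a * b) ^ m = a ^ m * b ^ m * k ^ m.choose 2 := by
  induction m with
  | zero => simp
  | succ m ih =>
    have hba : b ^ m * a = a * (b ^ m * k ^ m) := by
      simpa using zpow_mul_zpow_of_central hk h m 1
    calc (a * b) ^ (m + 1) = a ^ m * (b ^ m * a) * b * k ^ m.choose 2 := by
          rw [pow_succ, ih, mul_assoc _ (k ^ _), ((hk _).pow_left _).eq]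
          simp only [mul_assoc]
      _ = a ^ (m + 1) * b ^ (m + 1) * k ^ (m + 1).choose 2 := by
          rw [hba, Nat.choose_succ_succ', Nat.choose_one_right, pow_add k, pow_succ a, pow_succ b]
          simp only [mul_assoc, ((hk b).pow_left m).left_comm]

theorem mul_inv_pow_of_central {x y c d e : G} (hd : ∀ g, Commute d g) (he : ∀ g, Commute e g)
    (hxy : x * y = y * (x * c)) (hcx : c * x = x * (c * d)) (hcy : c * y = y * (c * e)) (m : ℕ) :
    (x * y⁻¹) ^ m = x ^ m * (y ^ m)⁻¹ * c ^ m.choose 2 * d ^ m.choose 3 *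
      e ^ ((m.choose 3 : ℤ) - m * m.choose 2) := by
  induction m with
  | zero => simp
  | succ m ih =>
    have hyx : y⁻¹ * x ^ m = x ^ m * c ^ m * d ^ m.choose 2 * y⁻¹ := by
      have hconj : y⁻¹ * x * y⁻¹⁻¹ = x * c := by rw [inv_inv, mul_assoc, hxy, inv_mul_cancel_left]
      rw [← mul_pow_of_central hd hcx, ← hconj, conj_pow, inv_inv, mul_inv_cancel_right]
    have hcy_pow : c ^ m * (y ^ (m + 1))⁻¹ = (y ^ (m + 1))⁻¹ * (c ^ m * (e ^ (m * (m + 1)))⁻¹) := by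
      simpa only [zpow_neg, zpow_natCast, mul_neg, ← Nat.cast_mul] using
        zpow_mul_zpow_of_central he hcy m (-(m + 1 : ℕ))
    calc (x * y⁻¹) ^ (m + 1)
        = x * (y⁻¹ * x ^ m) * (y ^ m)⁻¹ * c ^ m.choose 2 * d ^ m.choose 3 *
            e ^ ((m.choose 3 : ℤ) - m * m.choose 2) := by
          rw [pow_succ', ih]
          simp only [mul_assoc]
      _ = x ^ (m + 1) * (c ^ m * (y ^ (m + 1))⁻¹) * c ^ m.choose 2 *
            d ^ (m.choose 2 + m.choose 3) * e ^ ((m.choose 3 : ℤ) - m * m.choose 2) := by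
          rw [hyx, pow_succ', pow_succ y, mul_inv_rev, pow_add d]
          simp only [mul_assoc, ((hd _).pow_left (m.choose 2)).left_comm]
      _ = _ := by
          rw [hcy_pow, Nat.choose_succ_succ', Nat.choose_succ_succ, Nat.choose_one_right, pow_add c]
          simp only [mul_assoc, (((he _).pow_left (m * (m + 1))).inv_left).left_comm]
          congr 5
          rw [← zpow_natCast, ← zpow_neg, ← zpow_add]
          congr 1
          push_cast
          ring

end Collection

/-- In a nilpotent group of class 3,
`(xy⁻¹)^m = xᵐ y⁻ᵐ [x,y]^{C(m,2)} [x,y,x]^{C(m,3)} [x,y,y]^{C(m,3) - m·C(m,2)}`. -/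
theorem stmt_6 {G : Type*} [Group G] (h4 : Subgroup.lowerCentralSeries (⊤ : Subgroup G) 3 = ⊥)
    (x y : G) (m : ℕ) :
    (x * y⁻¹) ^ m =
      x ^ m * (y ^ m)⁻¹ * (pcomm x y) ^ (Nat.choose m 2) *
        (pcomm (pcomm x y) x) ^ (Nat.choose m 3) *
        (pcomm (pcomm x y) y) ^
          ((Nat.choose m 3 : ℤ) - (m : ℤ) * (Nat.choose m 2 : ℤ)) := by
  have hc : pcomm x y ∈ (⊤ : Subgroup G).lowerCentralSeries 1 :=
    pcomm_mem_lowerCentralSeries_succ (Subgroup.mem_top x) y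
  have central (b : G) : ∀ g, Commute (pcomm (pcomm x y) b) g :=
    commute_of_mem_lowerCentralSeries h4 (pcomm_mem_lowerCentralSeries_succ hc b)
  exact mul_inv_pow_of_central (central x) (central y) (mul_eq_mul_mul_pcomm x y)
    (mul_eq_mul_mul_pcomm _ x) (mul_eq_mul_mul_pcomm _ y) m
end
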